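/- arXiv:2604.25577 — 2 statements merged into one kernel-verified Lean document; each statement's English description precedes it below -/
import Mathlib

section
/- Second-derivative formula and convexity direction: fix α, β ∈ ℝ with αβ ≠ 0, an index g, and positive reals v_1, …, v_n; let C = ∑_{h≠g} v_h^β and G(t) = t^β + C. The function φ(t) = sign(αβ)·G(t)^α has second derivative at t = v_g equal to sign(αβ)·α·β·G(v_g)^{α−2}·v_g^{β−2}·((α−1)·β·v_g^β + (β−1)·G(v_g)), and the sign of this second derivative equals the sign of (α−1)·β·v_g^β + (β−1)·G(v_g). -/
/-! With `s = sign (α β)`, the chain rule gives `φ' = s α β G ^ (α - 1) t ^ (β - 1)` on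
`t > 0`, and differentiating once more and factoring out `G ^ (α - 2) t ^ (β - 2)` yields the
formula. Since `sign (α β) · α β = |α β| > 0`, the prefactor in front of the bracket is positive,
so the second derivative has the sign of the bracket. -/

open Real Topology

lemma Real.sign_mul_of_pos {c : ℝ} (hc : 0 < c) (x : ℝ) : sign (c * x) = sign x := by
  rcases lt_trichotomy x 0 with hx | rfl | hx
  · rw [sign_of_neg hx, sign_of_neg (mul_neg_of_pos_of_neg hc hx)]
  · rw [mul_zero]
  · rw [sign_of_pos hx, sign_of_pos (mul_pos hc hx)]

section RpowAddConstRpow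

variable {α β c t : ℝ}

lemma rpow_add_const_pos (ht : 0 < t) (hc : 0 ≤ c) : 0 < t ^ β + c :=
  add_pos_of_pos_of_nonneg (rpow_pos_of_pos ht β) hc

lemma hasDerivAt_rpow_add_const_rpow (ht : 0 < t) (hc : 0 ≤ c) :
    HasDerivAt (fun t : ℝ => (t ^ β + c) ^ α)
      (α * β * ((t ^ β + c) ^ (α - 1) * t ^ (β - 1))) t := by
  convert ((hasDerivAt_rpow_const (Or.inl ht.ne')).add_const c).rpow_const (p := α)
    (Or.inl (rpow_add_const_pos ht hc).ne') using 1
  ring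

lemma deriv_rpow_add_const_rpow_eventuallyEq (ht : 0 < t) (hc : 0 ≤ c) :
    deriv (fun t : ℝ => (t ^ β + c) ^ α)
      =ᶠ[𝓝 t] fun t => α * β * ((t ^ β + c) ^ (α - 1) * t ^ (β - 1)) := by
  filter_upwards [Ioi_mem_nhds ht] with s hs
  exact (hasDerivAt_rpow_add_const_rpow hs hc).deriv

lemma deriv_deriv_rpow_add_const_rpow (ht : 0 < t) (hc : 0 ≤ c) :
    deriv (deriv fun t : ℝ => (t ^ β + c) ^ α) t
      = α * β * (t ^ β + c) ^ (α - 2) * t ^ (β - 2)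
          * ((α - 1) * β * t ^ β + (β - 1) * (t ^ β + c)) := by
  set G := t ^ β + c
  have hG : 0 < G := rpow_add_const_pos ht hc
  have hG_pow : G ^ (α - 1) = G ^ (α - 2) * G := by
    rw [← rpow_add_one hG.ne']; ring_nf
  have ht_pow : t ^ (β - 1) * t ^ (β - 1) = t ^ (β - 2) * t ^ β := by
    rw [← rpow_add ht, ← rpow_add ht]; ring_nf
  have ht_pow' : t ^ (β - 1 - 1) = t ^ (β - 2) := by ring_nf
  have hG_deriv : HasDerivAt (fun t : ℝ => (t ^ β + c) ^ (α - 1))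
      ((α - 1) * β * (G ^ (α - 1 - 1) * t ^ (β - 1))) t :=
    hasDerivAt_rpow_add_const_rpow ht hc
  have hsecond : HasDerivAt (fun t : ℝ => α * β * ((t ^ β + c) ^ (α - 1) * t ^ (β - 1)))
      (α * β * ((α - 1) * β * (G ^ (α - 1 - 1) * t ^ (β - 1)) * t ^ (β - 1)
        + G ^ (α - 1) * ((β - 1) * t ^ (β - 1 - 1)))) t :=
    (hG_deriv.mul (hasDerivAt_rpow_const (Or.inl ht.ne'))).const_mul (α * β)
  rw [(deriv_rpow_add_const_rpow_eventuallyEq ht hc).deriv_eq, hsecond.deriv, ht_pow',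
    show α - 1 - 1 = α - 2 by ring, hG_pow]
  linear_combination α * β * (α - 1) * β * G ^ (α - 2) * ht_pow

end RpowAddConstRpow

/-- **Second-derivative formula and convexity direction**: fix `α, β : ℝ` with
`α * β ≠ 0`, an index `g`, and positive reals `v 1, …, v n`; let
`C = ∑ h ≠ g, v h ^ β` and `G t = t ^ β + C`.  The function
`φ t = sign (α * β) * (G t) ^ α` has second derivative at `t = v g` equal to
`sign (α * β) * α * β * (G (v g)) ^ (α - 2) * v g ^ (β - 2) *
  ((α - 1) * β * v g ^ β + (β - 1) * G (v g))`,
and the sign of this second derivative equals the sign of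
`(α - 1) * β * v g ^ β + (β - 1) * G (v g)`. -/
theorem second_derivative_formula_and_sign {n : ℕ} (α β : ℝ) (hαβ : α * β ≠ 0)
    (g : Fin n) (v : Fin n → ℝ) (hv : ∀ h, 0 < v h) :
    deriv (deriv (fun t : ℝ =>
        Real.sign (α * β) * (t ^ β + ∑ h ∈ Finset.univ.erase g, v h ^ β) ^ α)) (v g)
      = Real.sign (α * β) * α * β
          * (v g ^ β + ∑ h ∈ Finset.univ.erase g, v h ^ β) ^ (α - 2) * v g ^ (β - 2)
          * ((α - 1) * β * v g ^ β
              + (β - 1) * (v g ^ β + ∑ h ∈ Finset.univ.erase g, v h ^ β)) ∧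
    Real.sign (deriv (deriv (fun t : ℝ =>
        Real.sign (α * β) * (t ^ β + ∑ h ∈ Finset.univ.erase g, v h ^ β) ^ α)) (v g))
      = Real.sign ((α - 1) * β * v g ^ β
          + (β - 1) * (v g ^ β + ∑ h ∈ Finset.univ.erase g, v h ^ β)) := by
  set C := ∑ h ∈ Finset.univ.erase g, v h ^ β
  have hC : 0 ≤ C := Finset.sum_nonneg fun h _ => (rpow_pos_of_pos (hv h) β).le
  have hG : 0 < v g ^ β + C := rpow_add_const_pos (hv g) hC
  have formula : deriv (deriv fun t : ℝ => sign (α * β) * (t ^ β + C) ^ α) (v g)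
      = sign (α * β) * α * β * (v g ^ β + C) ^ (α - 2) * v g ^ (β - 2)
          * ((α - 1) * β * v g ^ β + (β - 1) * (v g ^ β + C)) := by
    simp only [deriv_const_mul_field']
    rw [deriv_deriv_rpow_add_const_rpow (hv g) hC]
    ring
  refine ⟨formula, ?_⟩
  have prefactor_pos : 0 < sign (α * β) * α * β * (v g ^ β + C) ^ (α - 2) * v g ^ (β - 2) := by
    rw [mul_assoc (sign (α * β)) α β]
    exact mul_pos (mul_pos (sign_mul_pos_of_ne_zero _ hαβ) (rpow_pos_of_pos hG _))
      (rpow_pos_of_pos (hv g) _)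
  rw [formula, sign_mul_of_pos prefactor_pos]
end

section
/- Pareto improvements strictly increase aggregate expenditure: suppose for every user u the bundle x(u,·) maximizes ∑_{i∈I} (s(u,i) − f(g(i)))·y_i over all bundles y : I → {0,1} with ∑_i y_i ≤ K. If x̃ is a feasible allocation with w_u(x̃) ≥ w_u(x) for every user u and w_{u₀}(x̃) > w_{u₀}(x) for some user u₀, then ∑_{u∈U} ∑_{i∈I} f(g(i))·x̃(u,i) > ∑_{u∈U} ∑_{i∈I} f(g(i))·x(u,i). -/
/-! Revealed preference: since `x u` is optimal for the net scores `s u i - f (g i)`, switching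
to the feasible bundle `x' u` cannot raise the net score, so every gain in score costs at
least as much extra expenditure. Summing over users, the one strict gain makes the total
expenditure rise strictly. -/

open Finset

theorem sum_mul_sub_le_sum_mul_sub_of_sum_sub_mul_le {I : Type*} [Fintype I]
    (s p x y : I → ℝ) (h : ∑ i, (s i - p i) * y i ≤ ∑ i, (s i - p i) * x i) :
    ∑ i, s i * y i - ∑ i, s i * x i ≤ ∑ i, p i * y i - ∑ i, p i * x i := by
  simp only [sub_mul, sum_sub_distrib] at h
  linarith

theorem pareto_improvement_increases_expenditure_general {U I G : Type*}
    [Fintype U] [Fintype I]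
    (g : I → G) (s : U → I → ℝ) (f : G → ℝ) (K : ℕ) (x x' : U → I → ℝ)
    (h_demand : ∀ u, ∀ y : I → ℝ, (∀ i, y i = 0 ∨ y i = 1) → ∑ i, y i ≤ K →
      ∑ i, (s u i - f (g i)) * y i ≤ ∑ i, (s u i - f (g i)) * x u i)
    (hx'_bin : ∀ u i, x' u i = 0 ∨ x' u i = 1) (hx'_budget : ∀ u, ∑ i, x' u i ≤ K)
    (h_weak : ∀ u, ∑ i, s u i * x u i ≤ ∑ i, s u i * x' u i)
    (h_strict : ∃ u₀, ∑ i, s u₀ i * x u₀ i < ∑ i, s u₀ i * x' u₀ i) :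
    ∑ u, ∑ i, f (g i) * x u i < ∑ u, ∑ i, f (g i) * x' u i := by
  have h_gain_le_cost : ∀ u, ∑ i, s u i * x' u i - ∑ i, s u i * x u i ≤
      ∑ i, f (g i) * x' u i - ∑ i, f (g i) * x u i := fun u =>
    sum_mul_sub_le_sum_mul_sub_of_sum_sub_mul_le (s u) (fun i => f (g i)) (x u) (x' u)
      (h_demand u (x' u) (hx'_bin u) (hx'_budget u))
  obtain ⟨u₀, hu₀⟩ := h_strict
  refine sum_lt_sum (fun u _ => ?_) ⟨u₀, mem_univ u₀, ?_⟩
  · linarith [h_gain_le_cost u, h_weak u]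
  · linarith [h_gain_le_cost u₀]

/-- **Pareto improvements strictly increase aggregate expenditure**: let `U` be a finite
user set, `I` a finite item set, `G` a finite group set with group map `g : I → G`,
`s : U → I → ℝ` scores, `f : G → ℝ` prices, `K` a budget.  Suppose for every user `u`
the bundle `x u` maximizes `∑ i, (s u i - f (g i)) * y i` over feasible bundles `y`
(with `y i ∈ {0,1}` and `∑ i, y i ≤ K`).  If `x'` is a feasible allocation with
`w_u x' ≥ w_u x` for every user `u` and `w_{u₀} x' > w_{u₀} x` for some user `u₀`
(where `w_u x = ∑ i, s u i * x u i`), then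
`∑ u, ∑ i, f (g i) * x' u i > ∑ u, ∑ i, f (g i) * x u i`. -/
theorem pareto_improvement_increases_expenditure {U I G : Type*}
    [Fintype U] [Fintype I] [Fintype G]
    (g : I → G) (s : U → I → ℝ) (f : G → ℝ) (K : ℕ) (x x' : U → I → ℝ)
    (hx_bin : ∀ u i, x u i = 0 ∨ x u i = 1) (hx_budget : ∀ u, ∑ i, x u i ≤ K)
    (h_demand : ∀ u, ∀ y : I → ℝ, (∀ i, y i = 0 ∨ y i = 1) → ∑ i, y i ≤ K →
      ∑ i, (s u i - f (g i)) * y i ≤ ∑ i, (s u i - f (g i)) * x u i)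
    (hx'_bin : ∀ u i, x' u i = 0 ∨ x' u i = 1) (hx'_budget : ∀ u, ∑ i, x' u i ≤ K)
    (h_weak : ∀ u, ∑ i, s u i * x u i ≤ ∑ i, s u i * x' u i)
    (h_strict : ∃ u₀, ∑ i, s u₀ i * x u₀ i < ∑ i, s u₀ i * x' u₀ i) :
    ∑ u, ∑ i, f (g i) * x u i < ∑ u, ∑ i, f (g i) * x' u i :=
  pareto_improvement_increases_expenditure_general g s f K x x' h_demand hx'_bin hx'_budget h_weak
    h_strict
end
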